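/- arXiv:2110.01181 — 5 statements merged into one kernel-verified Lean document; each statement's English description precedes it below -/
import Mathlib

section
/- Let P occur in T at some position. If the LMS factorization of P (with sentinels) is P = P_1 ⋯ P_p with p > 2, then in the LMS factorization of T, the characters of this occurrence corresponding to P_2 ⋯ P_{p-1} are factorized identically: each P_x for 2 ≤ x ≤ p-1 is exactly an LMS factor of T at the corresponding position. -/
/-!
Write `U = P ++ [d]` and `T.drop q = P ++ R`. Whether suffix `i` is of type S is decided by
comparing `l[i]` with `l[i+1]`, and on a tie by the type of suffix `i + 1`; so types at
positions `≤ b` of two lists with common prefix `P` agree as soon as they agree at `b`. At `b`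
they do agree: suffix `b` of `U` has type S, and since `d` is below every letter of `P` the
comparison of `U.drop b` with `U.drop (b + 1)` is settled before the sentinel, hence holds for
any padding `R`. Finally `l.drop k < l.drop (k - 1)` just says that suffix `k - 1` is not of
type S, since two suffixes of different lengths are distinct.
-/

namespace List

variable {α : Type*} [LinearOrder α]

def IsSType (l : List α) (i : ℕ) : Prop := l.drop i < l.drop (i + 1)

theorem isSType_iff {l : List α} {k : ℕ} (h : k + 1 < l.length) :
    l.IsSType k ↔ l[k] < l[k + 1] ∨ l[k] = l[k + 1] ∧ l.IsSType (k + 1) := by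
  rw [IsSType, drop_eq_getElem_cons (by omega), drop_eq_getElem_cons h, cons_lt_cons_iff,
    ← drop_eq_getElem_cons h]
  rfl

theorem drop_succ_lt_drop_iff_not_isSType {l : List α} {i : ℕ} (h : i < l.length) :
    l.drop (i + 1) < l.drop i ↔ ¬ l.IsSType i := by
  have hne : l.drop (i + 1) ≠ l.drop i := fun he => by
    have := congrArg length he
    simp only [length_drop] at this
    omega
  rw [IsSType, not_lt, lt_iff_le_and_ne]
  exact and_iff_left hne

theorem append_lt_append_of_append_singleton_lt {d : α} {w : List α} :
    ∀ {l₁ l₂ : List α}, l₂.length ≤ l₁.length → (∀ x ∈ l₁, d < x) →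
      l₁ ++ [d] < l₂ ++ [d] → l₁ ++ w < l₂ ++ w
  | [], [], _, _, h => absurd h (lt_irrefl _)
  | x :: _, [], _, hd, h => by
    rcases cons_lt_cons_iff.1 h with hxd | ⟨rfl, _⟩
    · exact absurd hxd (hd x mem_cons_self).not_gt
    · exact absurd (hd _ mem_cons_self) (lt_irrefl _)
  | x :: l₁, y :: l₂, hlen, hd, h => by
    simp only [cons_append, cons_lt_cons_iff] at h ⊢
    refine h.imp_right (And.imp_right ?_)
    exact append_lt_append_of_append_singleton_lt (by simpa using hlen)
      (fun z hz => hd z (mem_cons_of_mem x hz))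

theorem IsSType.append_of_append_singleton {P : List α} {d : α} {b : ℕ}
    (hd : ∀ x ∈ P, d < x) (hb : b < P.length) (h : (P ++ [d]).IsSType b) (w : List α) :
    (P ++ w).IsSType b := by
  unfold IsSType at h ⊢
  rw [drop_append_of_le_length hb.le, drop_append_of_le_length hb] at h ⊢
  exact append_lt_append_of_append_singleton_lt (by simp; omega)
    (fun x hx => hd x (mem_of_mem_drop hx)) h

theorem isSType_append_iff_of_le {P X Y : List α} {b : ℕ} (hb : b < P.length)
    (hbS : (P ++ X).IsSType b ↔ (P ++ Y).IsSType b) {k : ℕ} (hk : k ≤ b) :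
    (P ++ X).IsSType k ↔ (P ++ Y).IsSType k := by
  induction hk using Nat.decreasingInduction with
  | self => exact hbS
  | of_succ k hkb ih =>
    have hX : k + 1 < (P ++ X).length := by simp; omega
    have hY : k + 1 < (P ++ Y).length := by simp; omega
    rw [isSType_iff hX, isSType_iff hY, ih]
    simp only [getElem_append_left (show k < P.length by omega),
      getElem_append_left (show k + 1 < P.length by omega)]

end List

theorem stmt5_general {α : Type*} [LinearOrder α] (T P : List α) (d : α)
    (hd : ∀ x ∈ P, d < x) (q : ℕ) (hocc : P <+: T.drop q)
    (a b : ℕ) (h1a : 1 ≤ a) (hbm : b < P.length)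
    (hbS : (P ++ [d]).drop b < (P ++ [d]).drop (b + 1) ∧
           (P ++ [d]).drop b < (P ++ [d]).drop (b - 1)) :
    ∀ k, a ≤ k → k ≤ b →
      (((P ++ [d]).drop k < (P ++ [d]).drop (k + 1) ∧
        (P ++ [d]).drop k < (P ++ [d]).drop (k - 1)) ↔
       (T.drop (q + k) < T.drop (q + k + 1) ∧
        T.drop (q + k) < T.drop (q + k - 1))) := by
  intro k hak hkb
  obtain ⟨R, hR⟩ := hocc
  obtain ⟨j, rfl⟩ : ∃ j, k = j + 1 := ⟨k - 1, by omega⟩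
  have hbR : (P ++ R).IsSType b := List.IsSType.append_of_append_singleton hd hbm hbS.1 R
  have hS : ∀ i ≤ b, (P ++ [d]).IsSType i ↔ (P ++ R).IsSType i := fun _ hi =>
    List.isSType_append_iff_of_le hbm (iff_of_true hbS.1 hbR) hi
  have hT : ∀ i, T.drop (q + i) = (P ++ R).drop i := fun i => by
    rw [hR, List.drop_drop, Nat.add_comm]
  have hlen : ∀ w : List α, j < (P ++ w).length := fun w => by simp; omega
  rw [show q + (j + 1) + 1 = q + (j + 1 + 1) by omega, show q + (j + 1) - 1 = q + j by omega,
    Nat.add_sub_cancel, hT, hT, hT]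
  change (P ++ [d]).IsSType (j + 1) ∧ _ ↔ (P ++ R).IsSType (j + 1) ∧ _
  rw [List.drop_succ_lt_drop_iff_not_isSType (hlen _),
    List.drop_succ_lt_drop_iff_not_isSType (hlen _),
    hS (j + 1) hkb, hS j (by omega)]

/-- Let `P` occur in `T` at position `q` (`P` is a prefix of
`T.drop q`).  Consider the LMS factorization of `P` (computed on `P` padded
with an end sentinel `d` smaller than all characters of `P`): factor starts
are the S* positions, where position `k` is S* iff suffix `k` is type S and
suffix `k-1` is type L.  If `a` and `b` are S* positions of `P` with
`1 ≤ a ≤ b < |P|` (e.g. `a` the start of factor `P₂` and `b` the start of the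
last factor `P_p`, which exist when `p > 2`), then for every position `k` with
`a ≤ k ≤ b`, `k` is an S* position of `P` iff `q + k` is an S* position of
`T`; hence the interior factors `P₂ ⋯ P_{p-1}` are factorized identically in
the occurrence. -/
theorem stmt5 {α : Type*} [LinearOrder α] (T P : List α) (d : α)
    (hd : ∀ x ∈ P, d < x) (q : ℕ) (hocc : P <+: T.drop q)
    (a b : ℕ) (h1a : 1 ≤ a) (hab : a ≤ b) (hbm : b < P.length)
    (haS : (P ++ [d]).drop a < (P ++ [d]).drop (a + 1) ∧
           (P ++ [d]).drop a < (P ++ [d]).drop (a - 1))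
    (hbS : (P ++ [d]).drop b < (P ++ [d]).drop (b + 1) ∧
           (P ++ [d]).drop b < (P ++ [d]).drop (b - 1)) :
    ∀ k, a ≤ k → k ≤ b →
      (((P ++ [d]).drop k < (P ++ [d]).drop (k + 1) ∧
        (P ++ [d]).drop k < (P ++ [d]).drop (k - 1)) ↔
       (T.drop (q + k) < T.drop (q + k + 1) ∧
        T.drop (q + k) < T.drop (q + k - 1))) :=
  stmt5_general T P d hd q hocc a b h1a hbm hbS
end

section
/- The type of suffix T[i..] is determined by T[i..j] where j ≥ i is the smallest position with T[j] ≠ T[j+1]: T[i..] is type S iff T[j] < T[j+1]. In particular, suffixes starting inside a common substring of two strings have equal types as long as the first position of character change after them lies within the common substring. -/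
/-!
Comparing `T[i..]` with `T[i+1..]` character by character, as long as `T[k] = T[k+1]` both
suffixes start with the same character and the comparison passes on to `T[k+1..]` versus
`T[k+2..]`. The first position `j` with `T[j] ≠ T[j+1]` therefore decides the comparison. Since
this only reads `T[i..j+1]`, two strings sharing that window give their suffixes the same type.
-/

namespace List

theorem getElem_eq_of_take_eq {α : Type*} {T U : List α} {L k : ℕ} (h : T.take L = U.take L)
    (hk : k < L) (hT : k < T.length) (hU : k < U.length) : T[k] = U[k] := by
  simpa [getElem?_take, hk, hT, hU] using congrArg (·[k]?) h

variable {α : Type*} [LinearOrder α]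

theorem drop_lt_drop_succ_iff_of_getElem_eq {T : List α} {i : ℕ} (hi : i + 1 < T.length)
    (h : T[i] = T[i + 1]) : T.drop i < T.drop (i + 1) ↔ T.drop (i + 1) < T.drop (i + 2) := by
  rw [drop_eq_getElem_cons hi, drop_eq_getElem_cons (by omega : i < T.length), h,
    cons_lt_cons_iff]
  simp

theorem drop_lt_drop_succ_iff_of_getElem_ne {T : List α} {i : ℕ} (hi : i + 1 < T.length)
    (h : T[i] ≠ T[i + 1]) : T.drop i < T.drop (i + 1) ↔ T[i] < T[i + 1] := by
  rw [drop_eq_getElem_cons hi, drop_eq_getElem_cons (by omega : i < T.length),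
    cons_lt_cons_iff]
  simp [h]

theorem drop_lt_drop_succ_iff_of_first_change {i j : ℕ} {T : List α}
    (hj : j + 1 < T.length) (hij : i ≤ j)
    (heq : ∀ k, i ≤ k → ∀ hkj : k < j, T[k]'(by omega) = T[k + 1]'(by omega))
    (hne : T[j]'(by omega) ≠ T[j + 1]) :
    T.drop i < T.drop (i + 1) ↔ T[j]'(by omega) < T[j + 1] := by
  induction h : j - i generalizing i with
  | zero =>
    obtain rfl : i = j := by omega
    exact drop_lt_drop_succ_iff_of_getElem_ne hj hne
  | succ n ih =>
    rw [drop_lt_drop_succ_iff_of_getElem_eq (by omega) (heq i le_rfl (by omega))]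
    exact ih (i := i + 1) (by omega) (fun k hik hkj => heq k (by omega) hkj) hne (by omega)

theorem drop_lt_drop_succ_iff_of_take_eq {T U : List α} {L i j : ℕ}
    (hcommon : T.take L = U.take L) (hij : i ≤ j) (hjL : j + 1 < L) (hjT : j + 1 < T.length)
    (heq : ∀ k, i ≤ k → ∀ hkj : k < j, T[k]'(by omega) = T[k + 1]'(by omega))
    (hne : T[j]'(by omega) ≠ T[j + 1]) :
    T.drop i < T.drop (i + 1) ↔ U.drop i < U.drop (i + 1) := by
  have hjU : j + 1 < U.length := by
    have := congrArg length hcommon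
    simp only [length_take] at this
    omega
  have hTU : ∀ k (hk : k ≤ j + 1), T[k]'(by omega) = U[k]'(by omega) := fun k hk =>
    getElem_eq_of_take_eq hcommon (by omega) _ _
  have heqU : ∀ k, i ≤ k → ∀ hkj : k < j, U[k]'(by omega) = U[k + 1]'(by omega) :=
    fun k hik hkj => by rw [← hTU k (by omega), ← hTU (k + 1) (by omega)]; exact heq k hik hkj
  have hneU : U[j]'(by omega) ≠ U[j + 1] := by
    rwa [← hTU j (by omega), ← hTU (j + 1) le_rfl]
  rw [drop_lt_drop_succ_iff_of_first_change hjT hij heq hne,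
    drop_lt_drop_succ_iff_of_first_change hjU hij heqU hneU, hTU j (by omega), hTU (j + 1) le_rfl]

end List

/-- The type of suffix `T[i..]` is determined by `T[i..j]` where
`j ≥ i` is the smallest position with `T[j] ≠ T[j+1]`: suffix `i` is type S
(`T.drop i < T.drop (i+1)`) iff `T[j] < T[j+1]`.  In particular, suffixes
starting inside a common substring of two strings `T` and `U` have equal types
as long as the first position of character change after them lies within the
common substring. -/
theorem stmt6 {α : Type*} [LinearOrder α] (T : List α) :
    (∀ (i j : ℕ) (hij : i ≤ j) (hj : j + 1 < T.length)
      (heq : ∀ (k : ℕ) (hik : i ≤ k) (hkj : k < j),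
        T[k]'(by omega) = T[k + 1]'(by omega))
      (hne : T[j]'(by omega) ≠ T[j + 1]'(by omega)),
      (T.drop i < T.drop (i + 1) ↔ T[j]'(by omega) < T[j + 1]'(by omega))) ∧
    (∀ (U : List α) (p q L i j : ℕ)
      (hpL : p + L ≤ T.length) (hqL : q + L ≤ U.length)
      (hcommon : (T.drop p).take L = (U.drop q).take L)
      (hij : i ≤ j) (hjL : j + 1 < L)
      (heq : ∀ (k : ℕ) (hik : i ≤ k) (hkj : k < j),
        T[p + k]'(by omega) = T[p + k + 1]'(by omega))
      (hne : T[p + j]'(by omega) ≠ T[p + j + 1]'(by omega)),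
      (T.drop (p + i) < T.drop (p + i + 1) ↔
       U.drop (q + i) < U.drop (q + i + 1))) := by
  refine ⟨fun _ _ hij hj heq hne => List.drop_lt_drop_succ_iff_of_first_change hj hij heq hne,
    ?_⟩
  intro U p q L i j hpL _ hcommon hij hjL heq hne
  have key := List.drop_lt_drop_succ_iff_of_take_eq hcommon hij hjL
    (by simp only [List.length_drop]; omega)
    (fun k hik hkj => by simpa [add_assoc] using heq k hik hkj) (by simpa [add_assoc] using hne)
  simpa [List.drop_drop, add_assoc] using key
end

section
/- The number of occurrences of a pattern P in T equals the length of the BWT range of P, i.e., count(P) = r - ℓ + 1 where [ℓ, r] is the interval of lexicographic ranks of suffixes of T\$ having P as a prefix (and count(P)=0 when the interval is empty). -/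
/-- The number of occurrences of a pattern `P` in `T` equals the
length of the BWT range of `P`: if `[ℓ, r]` is the interval of lexicographic
ranks of suffixes of `W = T$` having `P` as a prefix, then
`count(P) = r + 1 - ℓ` (which is `r - ℓ + 1` for a nonempty interval, and `0`
when the interval is empty). -/
theorem stmt13 {α : Type*} [LinearOrder α]
    (T : List α) (d : α) (hd : ∀ a ∈ T, d < a)
    (W : List α) (hW : W = T ++ [d]) (N : ℕ) (hN : W.length = N)
    (sa : ℕ → ℕ)
    (hbij : Set.BijOn sa (Set.Icc 1 N) (Set.Ico 0 N))
    (hmono : ∀ k k', 1 ≤ k → k < k' → k' ≤ N →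
      W.drop (sa k) < W.drop (sa k'))
    (P : List α) (ℓ r : ℕ) (hℓ : 1 ≤ ℓ) (hr : r ≤ N)
    (hrange : ∀ k, (1 ≤ k ∧ k ≤ N ∧ P <+: W.drop (sa k)) ↔ (ℓ ≤ k ∧ k ≤ r)) :
    {j | j < N ∧ P <+: W.drop j}.ncard = r + 1 - ℓ := by
  have hsub : Set.Icc ℓ r ⊆ Set.Icc 1 N := by
    intro k hk
    obtain ⟨h1, h2, _⟩ := (hrange k).mpr ⟨hk.1, hk.2⟩
    exact ⟨h1, h2⟩
  have hset : {j | j < N ∧ P <+: W.drop j} = sa '' Set.Icc ℓ r := by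
    ext j
    constructor
    · rintro ⟨hj, hp⟩
      obtain ⟨k, hk, rfl⟩ := hbij.surjOn ⟨Nat.zero_le j, hj⟩
      exact ⟨k, (hrange k).mp ⟨hk.1, hk.2, hp⟩, rfl⟩
    · rintro ⟨k, hk, rfl⟩
      obtain ⟨h1, h2, hp⟩ := (hrange k).mpr ⟨hk.1, hk.2⟩
      exact ⟨(hbij.mapsTo ⟨h1, h2⟩).2, hp⟩
  rw [hset, Set.ncard_image_of_injOn (hbij.injOn.mono hsub)]
  rw [← Nat.card_coe_set_eq, Nat.card_coe_set_eq, Set.ncard_eq_toFinset_card',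
    Set.toFinset_Icc, Nat.card_Icc]
end

section
/- If each symbol of a string over an alphabet of size σ' is run-length encoded, then any LMS substring of the run-length encoded string at one grammar level has at most 2σ' runs; equivalently, a run-length compressed LMS substring has length at most 2σ'. -/
lemma aux_cons_lt_cons_iff {α : Type*} [LinearOrder α] {a b : α} {l m : List α} :
    (a :: l) < (b :: m) ↔ a < b ∨ a = b ∧ l < m := by
  constructor
  · intro h
    cases h with
    | cons h => exact Or.inr ⟨rfl, h⟩
    | rel h => exact Or.inl h
  · rintro (h | ⟨rfl, h⟩)
    · exact List.Lex.rel h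
    · exact List.Lex.cons h

/-- In a run-length compressed string (no two equal adjacent
symbols) over an alphabet of size `σ'`, every LMS substring `T[i..j]`
(spanning two consecutive S* positions) has length at most `2σ'`. -/
theorem stmt16 {α : Type*} [LinearOrder α] [Fintype α] (T : List α)
    (hrl : T.Chain' (· ≠ ·))
    (SStar : ℕ → Prop)
    (hdef : ∀ k, SStar k ↔
      (T.drop k < T.drop (k + 1) ∧ T.drop k < T.drop (k - 1)))
    (i j : ℕ) (h1 : 1 ≤ i) (hij : i < j) (hj : j < T.length)
    (hi : SStar i) (hjS : SStar j)
    (hbetween : ∀ k, i < k → k < j → ¬ SStar k) :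
    j + 1 - i ≤ 2 * Fintype.card α := by
  classical
  set f : ℕ → α := fun k => T.getD k (T[j]'hj) with hf
  have hfeq : ∀ (k : ℕ) (h : k < T.length), f k = T[k]'h := by
    intro k h; simp [hf, List.getD, List.getElem?_eq_getElem h]
  have hne : ∀ k, k + 1 < T.length → f k ≠ f (k + 1) := by
    intro k h
    rw [hfeq k (by omega), hfeq (k + 1) h]
    have := List.isChain_iff_getElem.mp hrl k (by omega)
    simpa [List.get_eq_getElem] using this
  have hdropc : ∀ (k : ℕ), k < T.length → T.drop k = f k :: T.drop (k + 1) := by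
    intro k h; rw [hfeq k h]; exact List.drop_eq_getElem_cons h
  have asc_iff : ∀ k, k + 1 < T.length → (T.drop k < T.drop (k + 1) ↔ f k < f (k + 1)) := by
    intro k h
    rw [hdropc k (by omega), hdropc (k + 1) h, aux_cons_lt_cons_iff]
    constructor
    · rintro (h' | ⟨e, _⟩)
      · exact h'
      · exact absurd e (hne k h)
    · exact Or.inl
  have desc_prev : ∀ k, 1 ≤ k → k < T.length → f k < f (k - 1) →
      T.drop k < T.drop (k - 1) := by
    intro k h1k hk hlt
    have hk1 : k - 1 < T.length := by omega
    rw [hdropc (k - 1) hk1, show k - 1 + 1 = k by omega, hdropc k hk]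
    exact List.Lex.rel hlt
  have desc_prev' : ∀ k, 1 ≤ k → k < T.length → T.drop k < T.drop (k - 1) →
      f k < f (k - 1) := by
    intro k h1k hk h
    rcases lt_trichotomy (f k) (f (k - 1)) with h' | h' | h'
    · exact h'
    · exfalso
      have := hne (k - 1) (by omega)
      rw [show k - 1 + 1 = k by omega] at this
      exact this h'.symm
    · exfalso
      have h2 : T.drop (k - 1) < T.drop k := by
        rw [hdropc (k - 1) (by omega), show k - 1 + 1 = k by omega, hdropc k hk]
        exact List.Lex.rel h'
      exact lt_asymm h h2
  have hAorD : ∀ k, k + 1 < T.length → f k < f (k + 1) ∨ f (k + 1) < f k :=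
    fun k h => (hne k h).lt_or_gt
  -- descent just before j
  have hjd : f j < f (j - 1) := desc_prev' j (by omega) hj ((hdef j).mp hjS).2
  -- no valley strictly between i and j
  have hnov : ∀ k, i < k → k < j → f k < f (k - 1) → f (k + 1) < f k := by
    intro k hik hkj hdsc
    rcases hAorD k (by omega) with hasc | hd
    · exfalso
      apply hbetween k hik hkj
      rw [hdef]
      exact ⟨(asc_iff k (by omega)).mpr hasc, desc_prev k (by omega) (by omega) hdsc⟩
    · exact hd
  -- descent propagates rightwards
  have hprop : ∀ k, i ≤ k → k < j → f (k + 1) < f k →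
      ∀ l, k ≤ l → l < j → f (l + 1) < f l := by
    intro k hik hkj hd l hkl hlj
    induction l, hkl using Nat.le_induction with
    | base => exact hd
    | succ l hl ih =>
      have ihd := ih (by omega)
      have := hnov (l + 1) (by omega) hlj (by simpa using ihd)
      exact this
  -- first descent position m
  have hPex : ∃ k, i ≤ k ∧ k < j ∧ f (k + 1) < f k :=
    ⟨j - 1, by omega, by omega, by rwa [show j - 1 + 1 = j by omega]⟩
  set m := Nat.find hPex with hm_def
  obtain ⟨him, hmj, hmd⟩ := Nat.find_spec hPex
  have hmmin : ∀ k, k < m → ¬ (i ≤ k ∧ k < j ∧ f (k + 1) < f k) :=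
    fun k hk => Nat.find_min hPex hk
  have hasc : ∀ k, i ≤ k → k < m → f k < f (k + 1) := by
    intro k hik hkm
    have hkj : k < j := by omega
    rcases hAorD k (by omega) with h | h
    · exact h
    · exact absurd ⟨hik, hkj, h⟩ (hmmin k hkm)
  have hdesc : ∀ l, m ≤ l → l < j → f (l + 1) < f l := hprop m him hmj hmd
  -- strictly increasing on [i, m]
  have chain1 : ∀ b a, i ≤ a → a < b → b ≤ m → f a < f b := by
    intro b
    induction b with
    | zero => intro a _ hab _; omega
    | succ b ih =>
      intro a ha hab hbm
      by_cases h : a = b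
      · subst h; exact hasc a ha (by omega)
      · exact lt_trans (ih a ha (by omega) (by omega)) (hasc b (by omega) (by omega))
  -- strictly decreasing on [m, j]
  have chain2 : ∀ b a, m ≤ a → a < b → b ≤ j → f b < f a := by
    intro b
    induction b with
    | zero => intro a _ hab _; omega
    | succ b ih =>
      intro a ha hab hbj
      by_cases h : a = b
      · subst h; exact hdesc a ha (by omega)
      · exact lt_trans (hdesc b (by omega) (by omega)) (ih a ha (by omega) (by omega))
  have c1 : m - i + 1 ≤ Fintype.card α := by
    have hg : StrictMono (fun x : Fin (m - i + 1) => f (i + x)) := by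
      intro a b hab
      exact chain1 (i + b) (i + a) (by omega) (by omega) (by omega)
    calc m - i + 1 = Fintype.card (Fin (m - i + 1)) := (Fintype.card_fin _).symm
      _ ≤ Fintype.card α := Fintype.card_le_of_injective _ hg.injective
  have c2 : j - m + 1 ≤ Fintype.card α := by
    have hg : StrictMono (fun x : Fin (j - m + 1) => f (j - x)) := by
      intro a b hab
      have ha : (a : ℕ) ≤ j - m := by omega
      have hb : (b : ℕ) ≤ j - m := by omega
      exact chain2 (j - a) (j - b) (by omega) (by omega) (by omega)
    calc j - m + 1 = Fintype.card (Fin (j - m + 1)) := (Fintype.card_fin _).symm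
      _ ≤ Fintype.card α := Fintype.card_le_of_injective _ hg.injective
  omega
end

section
/- Appending a character to a string P (with sentinels) changes the types of exactly a suffix run of positions: there exists ℓ ≥ 0 such that only the types of the last ℓ+1 positions of P (the maximal trailing run of equal characters) can change, and all of them change uniformly from L to S or keep their types. -/
private lemma cons_lt_iff' {α : Type*} [LinearOrder α] {a b : α} {s t : List α} :
    (a :: s) < (b :: t) ↔ a < b ∨ (a = b ∧ s < t) := by
  show List.Lex (· < ·) _ _ ↔ _
  constructor
  · intro h
    cases h with
    | rel h => exact Or.inl h
    | cons h => exact Or.inr ⟨rfl, h⟩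
  · rintro (h | ⟨rfl, h⟩)
    · exact List.Lex.rel h
    · exact List.Lex.cons h

private lemma getElem_congr'' {α : Type*} (P : List α) (i j : ℕ) (h : i = j)
    (hj : j < P.length) : P[i]'(h ▸ hj) = P[j] := by subst h; rfl

private lemma step' {α : Type*} [LinearOrder α] (T : List α) (i : ℕ) (h : i + 1 < T.length) :
    (T.drop i < T.drop (i + 1)) ↔
      (T[i]'(by omega) < T[i + 1]'h ∨
        (T[i]'(by omega) = T[i + 1]'h ∧ T.drop (i + 1) < T.drop (i + 2))) := by
  rw [List.drop_eq_getElem_cons (show i < T.length by omega),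
      List.drop_eq_getElem_cons h, cons_lt_iff']

/-- Appending a character `c` to `P` (with end sentinel `d`
smaller than all characters) changes suffix types only in the maximal trailing
run `P[r..m-1]` of equal characters: (1) every position `i < r` keeps its type;
(2) in `P` all positions of the trailing run are type L; and (3) in `P ++ [c]`
all positions of the trailing run have a uniform (equal) type, i.e. they either
all flip from L to S or all keep type L. -/
theorem stmt17 {α : Type*} [LinearOrder α] (P : List α) (d c : α)
    (hd : ∀ a ∈ P, d < a) (hdc : d < c)
    (m r : ℕ) (hm : P.length = m) (hP : 0 < m) (hrm : r < m)
    (hrun : ∀ (k : ℕ) (hrk : r ≤ k) (hk : k + 1 < m),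
      P[k]'(by omega) = P[k + 1]'(by omega))
    (hrmin : ∀ hr1 : 1 ≤ r, P[r - 1]'(by omega) ≠ P[r]'(by omega)) :
    (∀ i, i < r →
      ((P ++ [d]).drop i < (P ++ [d]).drop (i + 1) ↔
       (P ++ [c] ++ [d]).drop i < (P ++ [c] ++ [d]).drop (i + 1))) ∧
    (∀ k, r ≤ k → k < m →
      ¬ ((P ++ [d]).drop k < (P ++ [d]).drop (k + 1))) ∧
    (∀ k k', r ≤ k → k < m → r ≤ k' → k' < m →
      ((P ++ [c] ++ [d]).drop k < (P ++ [c] ++ [d]).drop (k + 1) ↔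
       (P ++ [c] ++ [d]).drop k' < (P ++ [c] ++ [d]).drop (k' + 1))) := by
  have lenQ : (P ++ [d]).length = m + 1 := by simp [hm]
  have lenQ' : (P ++ [c] ++ [d]).length = m + 2 := by simp [hm]
  have gQ : ∀ i (h : i < m), (P ++ [d])[i]'(by omega) = P[i]'(by omega) :=
    fun i h => List.getElem_append_left (by omega)
  have gQ' : ∀ i (h : i < m), (P ++ [c] ++ [d])[i]'(by omega) = P[i]'(by omega) := by
    intro i h
    rw [List.getElem_append_left (show i < (P ++ [c]).length by simp [hm]; omega)]
    exact List.getElem_append_left (by omega)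
  have gQd : ∀ i (h : m ≤ i) (h2 : i < m + 1), (P ++ [d])[i]'(by omega) = d := by
    intro i h h2
    rw [List.getElem_append_right (by omega), List.getElem_singleton]
  have gQ'c : ∀ i (h : i = m), (P ++ [c] ++ [d])[i]'(by omega) = c := by
    intro i h
    rw [List.getElem_append_left (show i < (P ++ [c]).length by simp [hm]; omega),
        List.getElem_append_right (by omega), List.getElem_singleton]
  -- Part 2
  have key2 : ∀ n k, r ≤ k → k < m → m - 1 - k ≤ n →
      ¬ ((P ++ [d]).drop k < (P ++ [d]).drop (k + 1)) := by
    intro n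
    induction n with
    | zero =>
      intro k hrk hkm hn
      have hk : k = m - 1 := by omega
      rw [step' _ k (by omega)]
      rw [gQ k (by omega), gQd (k + 1) (by omega) (by omega)]
      rintro (h | ⟨h, -⟩)
      · exact absurd h (not_lt.2 (hd _ (List.getElem_mem _)).le)
      · exact absurd h.symm (ne_of_lt (hd _ (List.getElem_mem _)))
    | succ n ih =>
      intro k hrk hkm hn
      by_cases hk1 : k + 1 < m
      · rw [step' _ k (by omega)]
        rw [gQ k (by omega), gQ (k + 1) (by omega)]
        rintro (h | ⟨-, h⟩)
        · exact absurd h (by rw [hrun k hrk hk1]; exact lt_irrefl _)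
        · exact ih (k + 1) (by omega) (by omega) (by omega) h
      · -- k = m - 1, same as base
        rw [step' _ k (by omega)]
        rw [gQ k (by omega), gQd (k + 1) (by omega) (by omega)]
        rintro (h | ⟨h, -⟩)
        · exact absurd h (not_lt.2 (hd _ (List.getElem_mem _)).le)
        · exact absurd h.symm (ne_of_lt (hd _ (List.getElem_mem _)))
  -- Part 3
  have key3 : ∀ n k, r ≤ k → k < m → m - 1 - k ≤ n →
      ((P ++ [c] ++ [d]).drop k < (P ++ [c] ++ [d]).drop (k + 1) ↔
       (P ++ [c] ++ [d]).drop (m - 1) < (P ++ [c] ++ [d]).drop (m - 1 + 1)) := by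
    intro n
    induction n with
    | zero =>
      intro k hrk hkm hn
      have hk : k = m - 1 := by omega
      rw [hk]
    | succ n ih =>
      intro k hrk hkm hn
      by_cases hk1 : k + 1 < m
      · rw [step' _ k (by omega)]
        rw [gQ' k (by omega), gQ' (k + 1) (by omega)]
        have heq := hrun k hrk hk1
        rw [← ih (k + 1) (by omega) (by omega) (by omega)]
        constructor
        · rintro (h | ⟨-, h⟩)
          · exact absurd h (by rw [heq]; exact lt_irrefl _)
          · exact h
        · intro h
          exact Or.inr ⟨heq, h⟩
      · have hk : k = m - 1 := by omega
        rw [hk]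
  -- Part 1
  have key1 : ∀ n i, i < r → r - 1 - i ≤ n →
      ((P ++ [d]).drop i < (P ++ [d]).drop (i + 1) ↔
       (P ++ [c] ++ [d]).drop i < (P ++ [c] ++ [d]).drop (i + 1)) := by
    intro n
    induction n with
    | zero =>
      intro i hir hn
      have hi : i = r - 1 := by omega
      have hne : P[i]'(by omega) ≠ P[i + 1]'(by omega) := by
        have h1 := hrmin (by omega)
        rwa [getElem_congr'' P (r - 1) i (by omega) (by omega),
             getElem_congr'' P r (i + 1) (by omega) (by omega)] at h1
      rw [step' _ i (by omega), step' _ i (by omega)]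
      rw [gQ i (by omega), gQ (i + 1) (by omega), gQ' i (by omega), gQ' (i + 1) (by omega)]
      simp [hne]
    | succ n ih =>
      intro i hir hn
      by_cases hne : P[i]'(by omega) = P[i + 1]'(by omega)
      · have hi1 : i + 1 < r := by
          rcases Nat.lt_or_ge (i + 1) r with h | h
          · exact h
          · exfalso
            have h1 := hrmin (by omega)
            rw [getElem_congr'' P (r - 1) i (by omega) (by omega),
                getElem_congr'' P r (i + 1) (by omega) (by omega)] at h1
            exact h1 hne
        rw [step' _ i (by omega), step' _ i (by omega)]
        rw [gQ i (by omega), gQ (i + 1) (by omega), gQ' i (by omega), gQ' (i + 1) (by omega)]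
        rw [ih (i + 1) hi1 (by omega)]
      · rw [step' _ i (by omega), step' _ i (by omega)]
        rw [gQ i (by omega), gQ (i + 1) (by omega), gQ' i (by omega), gQ' (i + 1) (by omega)]
        simp [hne]
  refine ⟨fun i hir => key1 (r - 1 - i) i hir le_rfl,
    fun k hrk hkm => key2 (m - 1 - k) k hrk hkm le_rfl,
    fun k k' h1 h2 h3 h4 => (key3 (m - 1 - k) k h1 h2 le_rfl).trans
      (key3 (m - 1 - k') k' h3 h4 le_rfl).symm⟩
end
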